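/- arXiv:2601.04501 — 3 statements merged into one kernel-verified Lean document; each statement's English description precedes it below -/
import Mathlib

section
/- If 0 < α < 2/3 and S ⊆ [m] has size k, then for every matrix M' ∈ ℝ^{n×m}, the Frobenius norm satisfies ‖M' Q^S‖² = ‖M'‖² - α(2-α)‖M' D^S‖² + (α/k)(3α-2)‖M' δ^S‖² ≤ ‖M'‖², where Q^S = I_m - α D^S - (α/k) δ^S (δ^S)^⊤. -/
open Matrix BigOperators

/-! Since `Q^S` is symmetric, `‖M' Q^S‖² = Tr(M'ᵀ M' (Q^S)²)`, and the relations `D² = D`,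
`D δ = δ`, `δᵀ δ = k` give `(Q^S)² = I - α(2-α) D + (α/k)(3α-2) δ δᵀ`. The inequality follows
because `α(2-α) ≥ 0` and `3α - 2 < 0`. -/

/-- Frobenius norm `‖M‖ = Tr(Mᵀ M)^{1/2}`. -/
noncomputable def frob {a b : ℕ} (M : Matrix (Fin a) (Fin b) ℝ) : ℝ :=
  Real.sqrt (Matrix.trace (Mᵀ * M))

/-- Indicator column vector of `S ⊆ [m]`. -/
def dvec {m : ℕ} (S : Finset (Fin m)) : Matrix (Fin m) (Fin 1) ℝ :=
  Matrix.of fun j _ => if j ∈ S then 1 else 0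

/-- Diagonal 0/1 matrix indicating `S ⊆ [m]`. -/
def Dmat {m : ℕ} (S : Finset (Fin m)) : Matrix (Fin m) (Fin m) ℝ :=
  Matrix.diagonal fun j => if j ∈ S then 1 else 0

/-- The matrix `Q^S = I_m - α D^S - (α/k) δ^S (δ^S)ᵀ`. -/
noncomputable def Qmat {m : ℕ} (S : Finset (Fin m)) (α : ℝ) (k : ℕ) :
    Matrix (Fin m) (Fin m) ℝ :=
  1 - α • Dmat S - (α / (k : ℝ)) • (dvec S * (dvec S)ᵀ)

lemma frob_sq {a b : ℕ} (M : Matrix (Fin a) (Fin b) ℝ) : frob M ^ 2 = trace (Mᵀ * M) :=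
  Real.sq_sqrt (posSemidef_conjTranspose_mul_self M).trace_nonneg

lemma frob_mul_sq {a b c : ℕ} (M : Matrix (Fin a) (Fin b) ℝ) (N : Matrix (Fin b) (Fin c) ℝ) :
    frob (M * N) ^ 2 = trace (Mᵀ * M * (N * Nᵀ)) := by
  rw [frob_sq, transpose_mul, Matrix.mul_assoc, trace_mul_comm]
  simp only [Matrix.mul_assoc]

section Indicator

variable {m : ℕ} (S : Finset (Fin m))

lemma transpose_Dmat : (Dmat S)ᵀ = Dmat S :=
  diagonal_transpose _

lemma Dmat_mul_Dmat : Dmat S * Dmat S = Dmat S := by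
  rw [Dmat, diagonal_mul_diagonal]
  congr 1
  ext j
  split_ifs <;> simp

lemma Dmat_mul_dvec : Dmat S * dvec S = dvec S := by
  ext i j
  simp only [Dmat, diagonal_mul, dvec, of_apply]
  split_ifs <;> simp

lemma transpose_dvec_mul_dvec : (dvec S)ᵀ * dvec S = (S.card : ℝ) • 1 := by
  ext i j
  simp [Subsingleton.elim i j, mul_apply, dvec]

lemma Dmat_mul_dvec_mul_transpose :
    Dmat S * (dvec S * (dvec S)ᵀ) = dvec S * (dvec S)ᵀ := by
  rw [← Matrix.mul_assoc, Dmat_mul_dvec]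

lemma dvec_mul_transpose_mul_Dmat :
    dvec S * (dvec S)ᵀ * Dmat S = dvec S * (dvec S)ᵀ := by
  rw [Matrix.mul_assoc, ← transpose_Dmat, ← transpose_mul, Dmat_mul_dvec]

lemma dvec_mul_transpose_sq :
    dvec S * (dvec S)ᵀ * (dvec S * (dvec S)ᵀ) = (S.card : ℝ) • (dvec S * (dvec S)ᵀ) := by
  rw [Matrix.mul_assoc, ← Matrix.mul_assoc (dvec S)ᵀ, transpose_dvec_mul_dvec,
    Matrix.smul_mul, Matrix.one_mul, Matrix.mul_smul]

lemma transpose_Qmat (α : ℝ) (k : ℕ) : (Qmat S α k)ᵀ = Qmat S α k := by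
  simp only [Qmat, transpose_sub, transpose_smul, transpose_one, transpose_Dmat,
    transpose_mul, transpose_transpose]

lemma Qmat_mul_transpose (α : ℝ) :
    Qmat S α S.card * (Qmat S α S.card)ᵀ =
      1 - (α * (2 - α)) • Dmat S + (α / S.card * (3 * α - 2)) • (dvec S * (dvec S)ᵀ) := by
  -- true also for `S = ∅`, thanks to `α / 0 = 0`
  have hcard : (α / S.card) ^ 2 * S.card = α * (α / S.card) := by
    rcases eq_or_ne (S.card : ℝ) 0 with h | h
    · simp [h]
    · field_simp
  rw [transpose_Qmat]
  simp only [Qmat, Matrix.sub_mul, Matrix.mul_sub, Matrix.one_mul, Matrix.mul_one,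
    Matrix.smul_mul, Matrix.mul_smul, Dmat_mul_Dmat, Dmat_mul_dvec_mul_transpose,
    dvec_mul_transpose_mul_Dmat, dvec_mul_transpose_sq, smul_smul]
  match_scalars
  · ring
  · ring
  · linear_combination hcard

end Indicator

theorem stmt_1_general (n m k : ℕ) (S : Finset (Fin m)) (hS : S.card = k)
    (α : ℝ) (hα0 : 0 < α) (hα1 : α < 2 / 3) (M' : Matrix (Fin n) (Fin m) ℝ) :
    frob (M' * Qmat S α k) ^ 2 =
        frob M' ^ 2 - α * (2 - α) * frob (M' * Dmat S) ^ 2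
          + (α / (k : ℝ)) * (3 * α - 2) * frob (M' * dvec S) ^ 2 ∧
      frob (M' * Qmat S α k) ^ 2 ≤ frob M' ^ 2 := by
  subst hS
  have hD : Dmat S * (Dmat S)ᵀ = Dmat S := by rw [transpose_Dmat, Dmat_mul_Dmat]
  have key : frob (M' * Qmat S α S.card) ^ 2 =
      frob M' ^ 2 - α * (2 - α) * frob (M' * Dmat S) ^ 2
        + (α / S.card) * (3 * α - 2) * frob (M' * dvec S) ^ 2 := by
    rw [frob_mul_sq, frob_mul_sq, frob_mul_sq, frob_sq, Qmat_mul_transpose, hD]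
    simp only [Matrix.mul_add, Matrix.mul_sub, Matrix.mul_one, Matrix.mul_smul, trace_add,
      trace_sub, trace_smul, smul_eq_mul]
  refine ⟨key, key ▸ ?_⟩
  have hDterm : 0 ≤ α * (2 - α) * frob (M' * Dmat S) ^ 2 := by
    have : 0 ≤ 2 - α := by linarith
    positivity
  have hdterm : α / S.card * (3 * α - 2) * frob (M' * dvec S) ^ 2 ≤ 0 :=
    mul_nonpos_of_nonpos_of_nonneg
      (mul_nonpos_of_nonneg_of_nonpos (by positivity) (by linarith)) (sq_nonneg _)
  linarith

theorem stmt_1 (n m k : ℕ) (hk : 0 < k) (S : Finset (Fin m)) (hS : S.card = k)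
    (α : ℝ) (hα0 : 0 < α) (hα1 : α < 2 / 3) (M' : Matrix (Fin n) (Fin m) ℝ) :
    frob (M' * Qmat S α k) ^ 2 =
        frob M' ^ 2 - α * (2 - α) * frob (M' * Dmat S) ^ 2
          + (α / (k : ℝ)) * (3 * α - 2) * frob (M' * dvec S) ^ 2 ∧
      frob (M' * Qmat S α k) ^ 2 ≤ frob M' ^ 2 :=
  stmt_1_general n m k S hS α hα0 hα1 M'
end

section
/- The subspaces V = {M : (I_n - J̄_n)M = 0} and V^⊥ = {M : J̄_n M = 0} of ℝ^{n×m} are both invariant under the linear map A^S(M) = M(I_m - α D^S) + (α/k)(J̄_n - I_n) M δ^S (δ^S)^⊤; moreover A^S(M) = M(I_m - α D^S) for M ∈ V, and A^S(M') = M' Q^S for M' ∈ V^⊥, where Q^S = I_m - α D^S - (α/k) δ^S (δ^S)^⊤. -/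
open Matrix BigOperators

/-- The matrix `J̄_n = (1/n) J_n`, where `J_n` is the all-ones matrix. -/
noncomputable def Jbar (n : ℕ) : Matrix (Fin n) (Fin n) ℝ :=
  ((n : ℝ))⁻¹ • Matrix.of fun _ _ => (1 : ℝ)

/-- The linear map `A^S(M) = M(I_m - α D^S) + (α/k)(J̄_n - I_n) M δ^S (δ^S)ᵀ`. -/
noncomputable def Amap {n m : ℕ} (S : Finset (Fin m)) (α : ℝ) (k : ℕ)
    (M : Matrix (Fin n) (Fin m) ℝ) : Matrix (Fin n) (Fin m) ℝ :=
  M * (1 - α • Dmat S) + (α / (k : ℝ)) • ((Jbar n - 1) * M * (dvec S * (dvec S)ᵀ))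

/-! On `V` the correction term of `A^S` vanishes because `(J̄_n - I_n) M = 0`, while on `V^⊥`
it equals `-(α/k) M' δ^S (δ^S)ᵀ` because `(J̄_n - I_n) M' = -M'`. In both cases `A^S` acts by right
multiplication, which preserves any subspace cut out by a left multiplication. -/

section Amap

variable {n m : ℕ} (S : Finset (Fin m)) (α : ℝ) (k : ℕ) {M : Matrix (Fin n) (Fin m) ℝ}

theorem Amap_eq_of_one_sub_Jbar_mul_eq_zero (hM : (1 - Jbar n) * M = 0) :
    Amap S α k M = M * (1 - α • Dmat S) := by
  have hJM : (Jbar n - 1) * M = 0 := by rw [← neg_sub, Matrix.neg_mul, hM, neg_zero]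
  rw [Amap, hJM, Matrix.zero_mul, smul_zero, add_zero]

theorem Amap_eq_mul_Qmat_of_Jbar_mul_eq_zero (hM : Jbar n * M = 0) :
    Amap S α k M = M * Qmat S α k := by
  have hJM : (Jbar n - 1) * M = -M := by rw [Matrix.sub_mul, hM, Matrix.one_mul, zero_sub]
  rw [Amap, Qmat, hJM, Matrix.mul_sub M (1 - α • Dmat S), Matrix.mul_smul, Matrix.neg_mul,
    smul_neg, ← sub_eq_add_neg]

end Amap

theorem stmt_4_general (n m k : ℕ) (α : ℝ)
    (S : Finset (Fin m)) :
    (∀ M : Matrix (Fin n) (Fin m) ℝ, (1 - Jbar n) * M = 0 →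
        Amap S α k M = M * (1 - α • Dmat S) ∧ (1 - Jbar n) * Amap S α k M = 0) ∧
    (∀ M' : Matrix (Fin n) (Fin m) ℝ, Jbar n * M' = 0 →
        Amap S α k M' = M' * Qmat S α k ∧ Jbar n * Amap S α k M' = 0) := by
  refine ⟨fun M hM => ?_, fun M' hM' => ?_⟩
  · have hA := Amap_eq_of_one_sub_Jbar_mul_eq_zero S α k hM
    exact ⟨hA, by rw [hA, ← Matrix.mul_assoc, hM, Matrix.zero_mul]⟩
  · have hA := Amap_eq_mul_Qmat_of_Jbar_mul_eq_zero S α k hM'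
    exact ⟨hA, by rw [hA, ← Matrix.mul_assoc, hM', Matrix.zero_mul]⟩

theorem stmt_4 (n m k : ℕ) (hn : 0 < n) (hk : 0 < k) (α : ℝ)
    (S : Finset (Fin m)) (hS : S.card = k) :
    (∀ M : Matrix (Fin n) (Fin m) ℝ, (1 - Jbar n) * M = 0 →
        Amap S α k M = M * (1 - α • Dmat S) ∧ (1 - Jbar n) * Amap S α k M = 0) ∧
    (∀ M' : Matrix (Fin n) (Fin m) ℝ, Jbar n * M' = 0 →
        Amap S α k M' = M' * Qmat S α k ∧ Jbar n * Amap S α k M' = 0) :=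
  stmt_4_general n m k α S
end

section
/- Let 0 < α < 1 and let S_1, ..., S_b be subsets of [m] whose union is [m]. Then for every nonzero matrix M ∈ ℝ^{n×m}, we have ‖M(I_m - α D^{S_1})(I_m - α D^{S_2}) ⋯ (I_m - α D^{S_b})‖ < ‖M‖ in Frobenius norm. -/
open Matrix BigOperators

lemma prod_eq_diag (m b : ℕ) (α : ℝ) (S : Fin b → Finset (Fin m)) :
    (List.ofFn fun i => (1 - α • Dmat (S i))).prod
      = Matrix.diagonal (fun j => ∏ i : Fin b, (1 - α * if j ∈ S i then 1 else 0)) := by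
  have h1 : (List.ofFn fun i => (1 - α • Dmat (S i)))
      = List.map (Matrix.diagonalRingHom (Fin m) ℝ)
          (List.ofFn fun i => (fun j => 1 - α * if j ∈ S i then 1 else 0)) := by
    rw [List.map_ofFn]
    congr 1
    funext i
    ext x y
    simp [Dmat, Matrix.diagonalRingHom_apply, Matrix.diagonal_apply, Matrix.one_apply]
    by_cases h : x = y <;> simp [h]
  rw [h1, List.prod_hom]
  simp only [Matrix.diagonalRingHom, RingHom.coe_mk, MonoidHom.coe_mk, OneHom.coe_mk]
  have h3 : (List.ofFn fun i => (fun j' : Fin m => 1 - α * if j' ∈ S i then 1 else 0)).prod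
      = fun j => ∏ i : Fin b, (1 - α * if j ∈ S i then 1 else 0) := by
    funext j
    have h2 := List.prod_hom (List.ofFn fun i => (fun j' => 1 - α * if j' ∈ S i then 1 else 0))
        (Pi.evalMonoidHom (fun _ : Fin m => ℝ) j)
    simp only [Pi.evalMonoidHom_apply] at h2
    rw [← h2, List.map_ofFn]
    simp [Function.comp, List.prod_ofFn]
  rw [h3]
  rfl

theorem stmt_6 (n m b : ℕ) (α : ℝ) (hα0 : 0 < α) (hα1 : α < 1)
    (S : Fin b → Finset (Fin m)) (hunion : ∀ j : Fin m, ∃ i, j ∈ S i)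
    (M : Matrix (Fin n) (Fin m) ℝ) (hM : M ≠ 0) :
    frob (M * (List.ofFn fun i => (1 - α • Dmat (S i))).prod) < frob M := by
  set d : Fin m → ℝ := fun j => ∏ i : Fin b, (1 - α * if j ∈ S i then 1 else 0) with hd
  have hd_pos : ∀ j, 0 < d j := by
    intro j
    apply Finset.prod_pos
    intro i _
    by_cases h : j ∈ S i <;> simp [h] <;> linarith
  have hd_lt : ∀ j, d j < 1 := by
    intro j
    obtain ⟨i0, hi0⟩ := hunion j
    have : d j < ∏ _i : Fin b, (1 : ℝ) := by
      apply Finset.prod_lt_prod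
      · intro i _
        by_cases h : j ∈ S i <;> simp [h] <;> linarith
      · intro i _
        by_cases h : j ∈ S i <;> simp [h] <;> linarith
      · exact ⟨i0, Finset.mem_univ _, by simp [hi0]; linarith⟩
    simpa using this
  rw [prod_eq_diag]
  unfold frob
  have htr : ∀ (A : Matrix (Fin n) (Fin m) ℝ),
      Matrix.trace (Aᵀ * A) = ∑ j : Fin m, ∑ i : Fin n, A i j ^ 2 := by
    intro A
    simp [Matrix.trace, Matrix.mul_apply, Matrix.diag, sq]
  rw [htr, htr]
  have hentry : ∀ i j, (M * Matrix.diagonal d) i j = M i j * d j := fun i j =>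
    Matrix.mul_diagonal d M i j
  apply Real.sqrt_lt_sqrt
  · positivity
  · have hsum : ∀ j, ∑ i : Fin n, (M * Matrix.diagonal d) i j ^ 2
        = d j ^ 2 * ∑ i : Fin n, M i j ^ 2 := by
      intro j
      rw [Finset.mul_sum]
      congr 1
      funext i
      rw [hentry]
      ring
    refine lt_of_eq_of_lt (Finset.sum_congr rfl (fun j _ => hsum j)) ?_
    -- obtain a column with positive sum of squares
    obtain ⟨i0, j0, hij⟩ : ∃ i j, M i j ≠ 0 := by
      by_contra h
      push_neg at h
      exact hM (by ext i j; simp [h])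
    have hc0 : 0 < ∑ i : Fin n, M i j0 ^ 2 :=
      Finset.sum_pos' (fun i _ => sq_nonneg _)
        ⟨i0, Finset.mem_univ _, by positivity⟩
    apply Finset.sum_lt_sum
    · intro j _
      have h1 : d j ^ 2 ≤ 1 := by
        have := hd_pos j
        have := hd_lt j
        nlinarith
      nlinarith [Finset.sum_nonneg (fun i (_ : i ∈ Finset.univ) => sq_nonneg (M i j))]
    · refine ⟨j0, Finset.mem_univ _, ?_⟩
      have h1 : d j0 ^ 2 < 1 := by
        have := hd_pos j0
        have := hd_lt j0
        nlinarith
      nlinarith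
end
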